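/- Let M be a monotone Möbius structure on S¹, a=(x,y), and q=(a,b), q'=(a,b'), q''=(a,b'') harmonic pairs on the left line lh_a such that b' separates b and b'' (b and b'' lie on different open arcs determined by b'). Then the distance is additive: |qq''| = |qq'| + |q'q''|. -/

import Mathlib

open scoped Classical

section Mobius

variable {X : Type*}

/-- The pairs `(x,y)` and `(z,u)` separate each other on the circularly ordered set `X`:
`z` and `u` lie on different open arcs determined by `x` and `y`. -/
def PairSeparates [CircularOrder X] (x y z u : X) : Prop :=
  (sbtw x z y ∧ sbtw y u x) ∨ (sbtw x u y ∧ sbtw y z x)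

/-- The pair `(d₁,d₂)` separates the pairs `(b₁,b₂)` and `(c₁,c₂)`: the latter two pairs lie
on different open arcs determined by `(d₁,d₂)`. -/
def ArcSepPairs [CircularOrder X] (d₁ d₂ b₁ b₂ c₁ c₂ : X) : Prop :=
  (sbtw d₁ b₁ d₂ ∧ sbtw d₁ b₂ d₂ ∧ sbtw d₂ c₁ d₁ ∧ sbtw d₂ c₂ d₁) ∨
  (sbtw d₁ c₁ d₂ ∧ sbtw d₁ c₂ d₂ ∧ sbtw d₂ b₁ d₁ ∧ sbtw d₂ b₂ d₁)

/-- Two pairs `(b₁,b₂)` and `(c₁,c₂)` of points are in the strong causal relation: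
either of them lies entirely in one open arc determined by the other. -/
def StrongCausal [CircularOrder X] (b₁ b₂ c₁ c₂ : X) : Prop :=
  (sbtw b₁ c₁ b₂ ∧ sbtw b₁ c₂ b₂) ∨ (sbtw b₂ c₁ b₁ ∧ sbtw b₂ c₂ b₁) ∨
  (sbtw c₁ b₁ c₂ ∧ sbtw c₁ b₂ c₂) ∨ (sbtw c₂ b₁ c₁ ∧ sbtw c₂ b₂ c₁)

/-- The topology generated by open balls of the semi-metrics with infinitely remote points,
centered at finite points. `D ω x y` denotes `|xy|` in the semi-metric with infinitely remote
point `ω`. -/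
def MTopology (D : X → X → X → ℝ) : TopologicalSpace X :=
  TopologicalSpace.generateFrom
    {s | ∃ ω x r, x ≠ ω ∧ s = {y | y ≠ ω ∧ D ω x y < r}}

/-- A (ptolemaic) monotone Möbius structure on a circle `X`, presented by the family of its
semi-metrics with infinitely remote points: `D ω x y` is the distance `|xy|_ω` in the
semi-metric with infinitely remote point `ω` (defined for `x, y ≠ ω`).  The semi-metrics
are pairwise related by metric inversion (up to homothety), every one of them satisfies the
Ptolemy inequality, the monotonicity axiom (M) holds, the M-topology is the given topology
of `X`, and `X` is homeomorphic to the circle. -/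
structure MonotoneMobius (X : Type*) [CircularOrder X] [t : TopologicalSpace X] where
  D : X → X → X → ℝ
  symm : ∀ ω x y, D ω x y = D ω y x
  refl : ∀ ω x, D ω x x = 0
  pos : ∀ ω x y, x ≠ y → x ≠ ω → y ≠ ω → 0 < D ω x y
  inversion : ∀ ω ω', ω ≠ ω' → ∃ c : ℝ, 0 < c ∧ ∀ x y, x ≠ ω → y ≠ ω → x ≠ ω' → y ≠ ω' →
    D ω' x y = c * D ω x y / (D ω x ω' * D ω y ω')
  ptolemy : ∀ ω x y z u, x ≠ ω → y ≠ ω → z ≠ ω → u ≠ ω →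
    D ω x y * D ω z u ≤ D ω x z * D ω y u + D ω x u * D ω y z
  mono : ∀ ω x y z u, x ≠ ω → y ≠ ω → z ≠ ω → u ≠ ω → PairSeparates x y z u →
    D ω x z * D ω y u < D ω x y * D ω z u ∧ D ω x u * D ω y z < D ω x y * D ω z u
  mtop : MTopology D = t
  circle : Nonempty (X ≃ₜ AddCircle (1 : ℝ))

variable [CircularOrder X] [TopologicalSpace X]

/-- The 4-tuple `(x,y,z,u)` is harmonic (of the first type): `|xz||yu| = |xu||yz|` in any
semi-metric of the Möbius structure. -/
def MonotoneMobius.Harmonic (M : MonotoneMobius X) (x y z u : X) : Prop :=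
  ∀ ω, ω ≠ x → ω ≠ y → ω ≠ z → ω ≠ u →
    M.D ω x z * M.D ω y u = M.D ω x u * M.D ω y z

/-- The distance `|q q'| = |ln ((|xp'||yp|)/(|xp||yp'|))|` between two harmonic pairs
`q = ((x,y),(p,·))` and `q' = ((x,y),(p',·))` with common axis `(x,y)`; computed here in the
semi-metric with infinitely remote point `x`, where it equals `|ln (|yp|_x / |yp'|_x)|`. -/
noncomputable def MonotoneMobius.lineDist (M : MonotoneMobius X) (x y p p' : X) : ℝ :=
  |Real.log (M.D x y p / M.D x y p')|

end Mobius


/-!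
Fix the semi-metric with infinitely remote point `ω` and put `r(w) = |yw| / |xw|`; the three
distances are `|ln (r(z)/r(z'))|`, `|ln (r(z')/r(z''))|` and `|ln (r(z)/r(z''))|`, so it suffices
that `r(z')` lies between `r(z)` and `r(z'')`. Harmonicity says `r(z) = r(u)`, and by the
monotonicity axiom a harmonic pair is separated by `(x, y)`, so each of the three pairs has a
point in the open arc from `x` to `y`. Monotonicity also makes `r` strictly decreasing along that
arc, and since `b'` separates `b` from `b''`, the representative of `b'` lies between the other two.
-/

section Circular

variable {α : Type*} [CircularOrder α] {a b c d p q : α}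

lemma SBtw.sbtw.left_ne (h : sbtw a b c) : a ≠ b := fun e => sbtw_irrefl_left (e ▸ h)

lemma SBtw.sbtw.ne_right (h : sbtw a b c) : b ≠ c := fun e => sbtw_irrefl_right (e ▸ h)

lemma sbtw_or_sbtw_of_ne (hab : a ≠ b) (hac : a ≠ c) (hbc : b ≠ c) :
    sbtw a b c ∨ sbtw a c b := by
  rcases btw_total a b c with h | h
  · refine .inl (sbtw_of_btw_not_btw h fun h' => ?_)
    rcases h.antisymm h' with e | e | e
    exacts [hab e, hbc e, hac e.symm]
  · have hacb : btw a c b := h.cyclic_left.cyclic_left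
    refine .inr (sbtw_of_btw_not_btw hacb fun h' => ?_)
    rcases hacb.antisymm h' with e | e | e
    exacts [hac e, hbc e.symm, hab e.symm]

lemma sbtw_of_sbtw_of_sbtw_right (h₁ : sbtw p a b) (h₂ : sbtw p b q) : sbtw a b q :=
  sbtw_cyclic_left ((sbtw_cyclic_right h₂).trans_left h₁)

lemma sbtw_of_sbtw_of_sbtw_swap (h₁ : sbtw p a q) (h₂ : sbtw q b p) : sbtw a q b :=
  sbtw_cyclic_right (sbtw_trans_right h₂ (sbtw_cyclic_right h₁))

lemma pairSeparates_trichotomy (hab : a ≠ b) (hac : a ≠ c) (had : a ≠ d)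
    (hbc : b ≠ c) (hbd : b ≠ d) (hcd : c ≠ d) :
    PairSeparates a b c d ∨ PairSeparates a c b d ∨ PairSeparates a d b c := by
  rcases sbtw_or_sbtw_of_ne hac hab hbc.symm with hc | hc <;>
    rcases sbtw_or_sbtw_of_ne had hab hbd.symm with hd | hd
  · rcases sbtw_or_sbtw_of_ne hac had hcd with h | h
    · exact .inr (.inr (.inr ⟨h, sbtw_cyclic_left hd⟩))
    · exact .inr (.inl (.inr ⟨h, sbtw_cyclic_left hc⟩))
  · exact .inl (.inl ⟨hc, sbtw_cyclic_left hd⟩)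
  · exact .inl (.inr ⟨hd, sbtw_cyclic_left hc⟩)
  · rcases sbtw_or_sbtw_of_ne hbc hbd hcd with h | h
    · exact .inr (.inl (.inl ⟨hc, sbtw_of_sbtw_of_sbtw_right h (sbtw_cyclic_left hd)⟩))
    · exact .inr (.inr (.inl ⟨hd, sbtw_of_sbtw_of_sbtw_right h (sbtw_cyclic_left hc)⟩))

variable {d₁ d₂ b₁ b₂ c₁ c₂ : α}

lemma ArcSepPairs.swap (h : ArcSepPairs d₁ d₂ b₁ b₂ c₁ c₂) : ArcSepPairs d₂ d₁ b₁ b₂ c₁ c₂ := by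
  unfold ArcSepPairs at *
  tauto

lemma ArcSepPairs.of_mem (h : ArcSepPairs d₁ d₂ b₁ b₂ c₁ c₂) (hb : b = b₁ ∨ b = b₂)
    (hc : c = c₁ ∨ c = c₂) : ArcSepPairs d₁ d₂ b b c c := by
  unfold ArcSepPairs at *
  rcases hb with rfl | rfl <;> rcases hc with rfl | rfl <;> tauto

/-- `ArcSepPairs c b a a e e` says that the pair `(c, b)` separates the points `a` and `e`. -/
lemma sbtw_of_arcSepPairs {x y e : α} (ha : sbtw x a y) (hc : sbtw x c y) (he : sbtw x e y)
    (hb : sbtw y b x) (hsep : ArcSepPairs c b a a e e) :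
    (sbtw x a c ∧ sbtw x c e) ∨ (sbtw x e c ∧ sbtw x c a) := by
  have hac : a ≠ c := by
    rcases hsep with ⟨h, -⟩ | ⟨-, -, h, -⟩
    exacts [h.left_ne.symm, h.ne_right]
  have hce : c ≠ e := by
    rcases hsep with ⟨-, -, h, -⟩ | ⟨h, -⟩
    exacts [h.ne_right.symm, h.left_ne]
  have hcyb : sbtw c y b := sbtw_of_sbtw_of_sbtw_swap hc hb
  have hbxc : sbtw b x c := sbtw_of_sbtw_of_sbtw_swap hb hc
  have after : ∀ w, sbtw x c w → sbtw x w y → sbtw c w b := fun w g hw =>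
    sbtw_trans_right (sbtw_of_sbtw_of_sbtw_right g hw) hcyb
  have before : ∀ w, sbtw x w c → sbtw b w c := fun w g => hbxc.trans_left g
  rcases sbtw_or_sbtw_of_ne ha.left_ne hc.left_ne hac with g₁ | g₁ <;>
    rcases sbtw_or_sbtw_of_ne hc.left_ne he.left_ne hce with g₂ | g₂
  · exact .inl ⟨g₁, g₂⟩
  · rcases hsep with ⟨h, -⟩ | ⟨h, -⟩
    exacts [absurd (before a g₁) (sbtw_asymm h), absurd (before e g₂) (sbtw_asymm h)]
  · rcases hsep with ⟨-, -, h, -⟩ | ⟨-, -, h, -⟩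
    exacts [absurd (after e g₂ he) (sbtw_asymm h), absurd (after a g₁ ha) (sbtw_asymm h)]
  · exact .inr ⟨g₂, g₁⟩

end Circular

lemma Real.abs_log_div_eq_add {a b c : ℝ} (ha : 0 < a) (hb : 0 < b) (hc : 0 < c)
    (hbac : b ∈ Set.uIcc a c) :
    |Real.log (a / c)| = |Real.log (a / b)| + |Real.log (b / c)| := by
  rw [Real.log_div ha.ne' hc.ne', Real.log_div ha.ne' hb.ne', Real.log_div hb.ne' hc.ne']
  rcases Set.mem_uIcc.1 hbac with ⟨h₁, h₂⟩ | ⟨h₁, h₂⟩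
  · have l₁ := Real.log_le_log ha h₁
    have l₂ := Real.log_le_log hb h₂
    rw [abs_of_nonpos (by linarith), abs_of_nonpos (by linarith), abs_of_nonpos (by linarith)]
    ring
  · have l₁ := Real.log_le_log hc h₁
    have l₂ := Real.log_le_log hb h₂
    rw [abs_of_nonneg (by linarith), abs_of_nonneg (by linarith), abs_of_nonneg (by linarith)]
    ring

namespace MonotoneMobius

variable {X : Type*} [CircularOrder X] [TopologicalSpace X] (M : MonotoneMobius X)
  {ω x y p q : X}

noncomputable def distRatio (ω x y w : X) : ℝ := M.D ω y w / M.D ω x w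

lemma distRatio_pos (hxp : x ≠ p) (hyp : y ≠ p) (hωx : ω ≠ x) (hωy : ω ≠ y) (hωp : ω ≠ p) :
    0 < M.distRatio ω x y p :=
  div_pos (M.pos ω y p hyp hωy.symm hωp.symm) (M.pos ω x p hxp hωx.symm hωp.symm)

lemma div_distRatio (ω x y p q : X) :
    M.distRatio ω x y p / M.distRatio ω x y q =
      M.D ω x q * M.D ω y p / (M.D ω x p * M.D ω y q) := by
  rw [distRatio, distRatio, div_div_div_eq, mul_comm (M.D ω y p)]

lemma distRatio_lt_of_sbtw (hωx : ω ≠ x) (hωy : ω ≠ y) (hωp : ω ≠ p) (hωq : ω ≠ q)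
    (hpq : sbtw x p q) (hqy : sbtw x q y) : M.distRatio ω x y q < M.distRatio ω x y p := by
  have hmono := (M.mono ω x q y p hωx.symm hωq.symm hωy.symm hωp.symm
    (.inr ⟨hpq, sbtw_cyclic_left hqy⟩)).2
  rw [M.symm ω q y] at hmono
  rw [distRatio, distRatio, div_lt_div_iff₀ (M.pos ω x q hqy.left_ne hωx.symm hωq.symm)
    (M.pos ω x p hpq.left_ne hωx.symm hωp.symm)]
  linarith

lemma Harmonic.pairSeparates (hxy : x ≠ y) (hxp : x ≠ p) (hxq : x ≠ q) (hyp : y ≠ p)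
    (hyq : y ≠ q) (hpq : p ≠ q) (hωx : ω ≠ x) (hωy : ω ≠ y) (hωp : ω ≠ p) (hωq : ω ≠ q)
    (h : M.Harmonic x y p q) : PairSeparates x y p q := by
  have hh := h ω hωx hωy hωp hωq
  rcases pairSeparates_trichotomy hxy hxp hxq hyp hyq hpq with hs | hs | hs
  · exact hs
  · have hmono := (M.mono ω x p y q hωx.symm hωp.symm hωy.symm hωq.symm hs).2
    rw [M.symm ω p y, hh] at hmono
    exact absurd hmono (lt_irrefl _)
  · have hmono := (M.mono ω x q y p hωx.symm hωq.symm hωy.symm hωp.symm hs).2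
    rw [M.symm ω q y, ← hh] at hmono
    exact absurd hmono (lt_irrefl _)

lemma Harmonic.distRatio_eq (hxp : x ≠ p) (hxq : x ≠ q) (hωx : ω ≠ x) (hωy : ω ≠ y)
    (hωp : ω ≠ p) (hωq : ω ≠ q) (h : M.Harmonic x y p q) :
    M.distRatio ω x y q = M.distRatio ω x y p := by
  rw [distRatio, distRatio, div_eq_div_iff (M.pos ω x q hxq hωx.symm hωq.symm).ne'
    (M.pos ω x p hxp hωx.symm hωp.symm).ne']
  linear_combination h ω hωx hωy hωp hωq

lemma Harmonic.exists_sbtw_distRatio_eq (hxy : x ≠ y) (hxp : x ≠ p) (hxq : x ≠ q) (hyp : y ≠ p)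
    (hyq : y ≠ q) (hpq : p ≠ q) (hωx : ω ≠ x) (hωy : ω ≠ y) (hωp : ω ≠ p) (hωq : ω ≠ q)
    (h : M.Harmonic x y p q) :
    ∃ a b, ((a = p ∧ b = q) ∨ (a = q ∧ b = p)) ∧ sbtw x a y ∧ sbtw y b x ∧
      M.distRatio ω x y a = M.distRatio ω x y p := by
  rcases h.pairSeparates M hxy hxp hxq hyp hyq hpq hωx hωy hωp hωq with ⟨ha, hb⟩ | ⟨ha, hb⟩
  · exact ⟨p, q, .inl ⟨rfl, rfl⟩, ha, hb, rfl⟩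
  · exact ⟨q, p, .inr ⟨rfl, rfl⟩, ha, hb, h.distRatio_eq M hxp hxq hωx hωy hωp hωq⟩

end MonotoneMobius

/-- Let `M` be a monotone Möbius structure on the circle, `a = (x,y)`, and
`q = (a,b)`, `q' = (a,b')`, `q'' = (a,b'')` harmonic pairs on the left line `lh_a`
(`b = (z,u)`, `b' = (z',u')`, `b'' = (z'',u'')`) such that `b'` separates `b` and `b''`.
Then the distance `|qq'| = |ln((|xz'||yz|)/(|xz||yz'|))|` (computed in any semi-metric of
`M`) is additive: `|qq''| = |qq'| + |q'q''|`. -/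
theorem stmt13 {X : Type*} [CircularOrder X] [TopologicalSpace X]
    (M : MonotoneMobius X) (x y z u z' u' z'' u'' : X)
    (hxy : x ≠ y) (hxz : x ≠ z) (hxu : x ≠ u) (hyz : y ≠ z) (hyu : y ≠ u) (hzu : z ≠ u)
    (hxz' : x ≠ z') (hxu' : x ≠ u') (hyz' : y ≠ z') (hyu' : y ≠ u') (hzu' : z' ≠ u')
    (hxz'' : x ≠ z'') (hxu'' : x ≠ u'') (hyz'' : y ≠ z'') (hyu'' : y ≠ u'') (hzu'' : z'' ≠ u'')
    (hq : M.Harmonic x y z u) (hq' : M.Harmonic x y z' u') (hq'' : M.Harmonic x y z'' u'')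
    (hsep : ArcSepPairs z' u' z u z'' u'') :
    ∀ ω : X, ω ≠ x → ω ≠ y → ω ≠ z → ω ≠ u → ω ≠ z' → ω ≠ u' → ω ≠ z'' → ω ≠ u'' →
      |Real.log (M.D ω x z'' * M.D ω y z / (M.D ω x z * M.D ω y z''))| =
        |Real.log (M.D ω x z' * M.D ω y z / (M.D ω x z * M.D ω y z'))| +
        |Real.log (M.D ω x z'' * M.D ω y z' / (M.D ω x z' * M.D ω y z''))| := by
  intro ω hωx hωy hωz hωu hωz' hωu' hωz'' hωu''
  obtain ⟨a, _, haz, ha, -, hra⟩ :=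
    hq.exists_sbtw_distRatio_eq M hxy hxz hxu hyz hyu hzu hωx hωy hωz hωu
  obtain ⟨c, b, hcb, hc, hb, hrc⟩ :=
    hq'.exists_sbtw_distRatio_eq M hxy hxz' hxu' hyz' hyu' hzu' hωx hωy hωz' hωu'
  obtain ⟨e, _, hez, he, -, hre⟩ :=
    hq''.exists_sbtw_distRatio_eq M hxy hxz'' hxu'' hyz'' hyu'' hzu'' hωx hωy hωz'' hωu''
  replace haz : a = z ∨ a = u := haz.imp And.left And.left
  replace hez : e = z'' ∨ e = u'' := hez.imp And.left And.left
  have hsep' : ArcSepPairs c b a a e e := by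
    rcases hcb with ⟨rfl, rfl⟩ | ⟨rfl, rfl⟩
    exacts [hsep.of_mem haz hez, hsep.swap.of_mem haz hez]
  have hωa : ω ≠ a := by rcases haz with rfl | rfl <;> assumption
  have hωc : ω ≠ c := by rcases hcb with ⟨rfl, -⟩ | ⟨rfl, -⟩ <;> assumption
  have hωe : ω ≠ e := by rcases hez with rfl | rfl <;> assumption
  have hbetween :
      M.distRatio ω x y z' ∈ Set.uIcc (M.distRatio ω x y z) (M.distRatio ω x y z'') := by
    rw [← hra, ← hrc, ← hre, Set.mem_uIcc]
    rcases sbtw_of_arcSepPairs ha hc he hb hsep' with ⟨hac, hce⟩ | ⟨hec, hca⟩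
    · exact .inr ⟨(M.distRatio_lt_of_sbtw hωx hωy hωc hωe hce he).le,
        (M.distRatio_lt_of_sbtw hωx hωy hωa hωc hac hc).le⟩
    · exact .inl ⟨(M.distRatio_lt_of_sbtw hωx hωy hωc hωa hca ha).le,
        (M.distRatio_lt_of_sbtw hωx hωy hωe hωc hec hc).le⟩
  rw [← M.div_distRatio, ← M.div_distRatio, ← M.div_distRatio]
  exact Real.abs_log_div_eq_add (M.distRatio_pos hxz hyz hωx hωy hωz)
    (M.distRatio_pos hxz' hyz' hωx hωy hωz') (M.distRatio_pos hxz'' hyz'' hωx hωy hωz'') hbetween
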